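/- For every n ≥ 2 there is a constant C > 0, depending only on n, such that for every integer k ≥ 1, every r with k⁻¹ ≤ r ≤ k^{−1/2}, and every x ∈ Sⁿ, the L²(σ)-normalized highest weight spherical harmonic Q̃_k = Q_k / ‖Q_k‖_{L²(σ)} satisfies ‖Q̃_k‖_{L²(B_r(x))} ≤ C r^{n/2} k^{(n−1)/4}. In particular, taking r = k⁻¹ gives sup_{x ∈ Sⁿ} r^{−1/2} ‖Q̃_k‖_{L²(B_r(x))} ≤ C r^{(n−1)/4}. -/

import Mathlib

open MeasureTheory Real

noncomputable section

/-- `ℝ^{n+1}` as a Euclidean space. -/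
abbrev Esp (n : ℕ) := EuclideanSpace ℝ (Fin (n + 1))

/-- The unit sphere `Sⁿ ⊂ ℝ^{n+1}`. -/
abbrev Sph (n : ℕ) := Metric.sphere (0 : Esp n) 1

/-- The surface measure `σ` on the unit sphere `Sⁿ`. -/
def sphMeasure (n : ℕ) : Measure (Sph n) := (volume : Measure (Esp n)).toSphere

/-- The geodesic distance `d(x,y) = arccos ⟨x,y⟩` on the sphere. -/
def gdist {n : ℕ} (x y : Sph n) : ℝ := Real.arccos (inner ℝ (x : Esp n) (y : Esp n))

/-- The geodesic ball `B_r(x) ⊂ Sⁿ`. -/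
def gball {n : ℕ} (x : Sph n) (r : ℝ) : Set (Sph n) := {y | gdist x y < r}

/-- `u : Sⁿ → ℂ` is a spherical harmonic of degree `k`: the restriction to `Sⁿ` of a
polynomial on `ℝ^{n+1}` that is homogeneous of degree `k` and harmonic. -/
def IsSphericalHarmonic {n : ℕ} (k : ℕ) (u : Sph n → ℂ) : Prop :=
  ∃ P : MvPolynomial (Fin (n + 1)) ℂ, P.IsHomogeneous k ∧
    (∑ i, MvPolynomial.pderiv i (MvPolynomial.pderiv i P)) = 0 ∧
    ∀ x : Sph n, u x = MvPolynomial.eval (fun i => ((x : Esp n) i : ℂ)) P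

/-- The `L²(σ)` norm of `u` over the geodesic ball `B_r(x)`. -/
def L2g {n : ℕ} (u : Sph n → ℂ) (x : Sph n) (r : ℝ) : ℝ :=
  Real.sqrt (∫ y in gball x r, ‖u y‖ ^ 2 ∂ sphMeasure n)

/-- The `L^p(σ)` norm of `u` on `Sⁿ`. -/
def LpS {n : ℕ} (u : Sph n → ℂ) (p : ℝ) : ℝ :=
  (∫ x, ‖u x‖ ^ p ∂ sphMeasure n) ^ (1 / p)

/-- The critical exponent `p_c = 2(n+1)/(n-1)`. -/
def pc (n : ℕ) : ℝ := 2 * ((n : ℝ) + 1) / ((n : ℝ) - 1)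

/-- The highest weight spherical harmonic `Q_k(x) = (x₁ + i x₂)^k` on `Sⁿ`. -/
def Qfun (n k : ℕ) (x : Sph n) : ℂ :=
  ((((x : Esp n) 0 : ℝ) : ℂ) + Complex.I * (((x : Esp n) 1 : ℝ) : ℂ)) ^ k

/-- The `L²(σ)` norm of `Q_k`. -/
def Qnorm (n k : ℕ) : ℝ :=
  Real.sqrt (∫ x : Sph n, ‖Qfun n k x‖ ^ 2 ∂ sphMeasure n)

/-- The `L²(σ)`-normalized highest weight spherical harmonic `Q̃_k = Q_k / ‖Q_k‖_{L²(σ)}`. -/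
def Qtilde (n k : ℕ) (x : Sph n) : ℂ := Qfun n k x / (Qnorm n k : ℂ)

/-- `t(x) = x₃² + ⋯ + x_{n+1}²`, the squared distance from the equatorial plane. -/
def tfun (n : ℕ) (x : Sph n) : ℝ :=
  ∑ i ∈ Finset.univ.filter (fun i : Fin (n + 1) => i ≠ 0 ∧ i ≠ 1), ((x : Esp n) i) ^ 2


/-!
On `Sⁿ` we have `|Q_k|² = (1 - t)^k ≤ 1`, where `t = x₃² + ⋯ + x_{n+1}²`, so
`‖Q̃_k‖²_{L²(B_r(x))} ≤ σ(B_r(x)) / ‖Q_k‖²`. Both measures are computed through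
`σ(A) = (n + 1) · vol(cone over A)`. The cone over a cap of radius `r ≤ 1` is covered by
`⌊1/r⌋ + 1` Euclidean balls of radius `2r` centred on the axis, so `σ(B_r(x)) ≲ rⁿ`.
Conversely, by Bernoulli's inequality `|Q_k|² ≥ 1/2` on the tube `{t < s²}` when
`k s² ≤ 1/2`, and the cone over that tube contains a box of volume `≳ s^{n-1}`; with
`s ≍ k^{-1/2}` this gives `‖Q_k‖² ≳ k^{-(n-1)/2}`. Hence
`‖Q̃_k‖_{L²(B_r(x))} ≲ r^{n/2} k^{(n-1)/4}` for every `r ≤ 1`, and the second estimate is the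
case `r = k⁻¹`.
-/
open scoped Pointwise

section Sphere

variable {n : ℕ}

lemma sum_sq_coord_eq_one (x : Sph n) : ∑ i, (x : Esp n) i ^ 2 = 1 := by
  simpa [mem_sphere_zero_iff_norm.mp x.2] using (EuclideanSpace.norm_sq_eq (x : Esp n)).symm

lemma norm_sub_le_gdist (x z : Sph n) : ‖(z : Esp n) - x‖ ≤ gdist x z := by
  have hx : ‖(x : Esp n)‖ = 1 := mem_sphere_zero_iff_norm.mp x.2
  have hz : ‖(z : Esp n)‖ = 1 := mem_sphere_zero_iff_norm.mp z.2
  have hinner : |inner ℝ (x : Esp n) (z : Esp n)| ≤ 1 := by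
    simpa [hx, hz] using abs_real_inner_le_norm (x : Esp n) (z : Esp n)
  have hcos : cos (gdist x z) = inner ℝ (x : Esp n) (z : Esp n) :=
    cos_arccos (neg_le_of_abs_le hinner) (le_of_abs_le hinner)
  have hchord : ‖(z : Esp n) - x‖ ^ 2 = 2 - 2 * cos (gdist x z) := by
    rw [norm_sub_sq_real, hx, hz, hcos, real_inner_comm]
    ring
  have hθ : 0 ≤ gdist x z := arccos_nonneg _
  refine (pow_le_pow_iff_left₀ (norm_nonneg _) hθ two_ne_zero).mp ?_
  linarith [one_sub_sq_div_two_le_cos (x := gdist x z)]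

lemma isOpen_gball (x : Sph n) (r : ℝ) : IsOpen (gball x r) :=
  isOpen_lt (continuous_arccos.comp (continuous_const.inner continuous_subtype_val))
    continuous_const

instance : IsFiniteMeasure (sphMeasure n) := by
  unfold sphMeasure
  infer_instance

lemma volume_smul_image_ne_top (s : Set (Sph n)) :
    volume (Set.Ioo (0 : ℝ) 1 • ((↑) '' s) : Set (Esp n)) ≠ ⊤ := by
  refine ne_top_of_le_ne_top (measure_ball_lt_top (x := (0 : Esp n)) (r := 1)).ne
    (measure_mono ?_)
  rintro _ ⟨a, ha, _, ⟨z, -, rfl⟩, rfl⟩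
  simpa [norm_smul, abs_of_pos ha.1, mem_sphere_zero_iff_norm.mp z.2] using ha.2

lemma sphMeasure_real_apply {s : Set (Sph n)} (hs : MeasurableSet s) :
    (sphMeasure n).real s =
      (n + 1) * volume.real (Set.Ioo (0 : ℝ) 1 • ((↑) '' s) : Set (Esp n)) := by
  rw [measureReal_def, sphMeasure, Measure.toSphere_apply' _ hs, ENNReal.toReal_mul,
    finrank_euclideanSpace_fin, ENNReal.toReal_natCast, measureReal_def]
  push_cast
  rfl

lemma volume_real_ball (c : Esp n) {ρ : ℝ} (hρ : 0 ≤ ρ) :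
    volume.real (Metric.ball c ρ) = ρ ^ (n + 1) * volume.real (Metric.ball (0 : Esp n) 1) := by
  simp [measureReal_def, Measure.addHaar_ball _ c hρ, ENNReal.toReal_mul, hρ]

lemma L2g_le_of_norm_le {u : Sph n → ℂ} {M : ℝ} (hu : ∀ y, ‖u y‖ ≤ M) (x : Sph n) (r : ℝ) :
    L2g u x r ≤ M * √((sphMeasure n).real (gball x r)) := by
  have hM : 0 ≤ M := (norm_nonneg _).trans (hu x)
  have hsq : ∀ y ∈ gball x r, ‖‖u y‖ ^ 2‖ ≤ M ^ 2 := fun y _ => by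
    rw [norm_pow, norm_norm]
    exact pow_le_pow_left₀ (norm_nonneg _) (hu y) 2
  have hint : ∫ y in gball x r, ‖u y‖ ^ 2 ∂sphMeasure n ≤
      M ^ 2 * (sphMeasure n).real (gball x r) :=
    (Real.le_norm_self _).trans (norm_setIntegral_le_of_norm_le_const (measure_lt_top _ _) hsq)
  calc L2g u x r ≤ √(M ^ 2 * (sphMeasure n).real (gball x r)) := Real.sqrt_le_sqrt hint
    _ = M * √((sphMeasure n).real (gball x r)) := by
        rw [Real.sqrt_mul (sq_nonneg _), Real.sqrt_sq hM]

end Sphere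

section Cap

variable {n : ℕ}

lemma smul_image_gball_subset_iUnion_ball {x : Sph n} {r : ℝ} (hr : 0 < r) :
    (Set.Ioo (0 : ℝ) 1 • ((↑) '' gball x r) : Set (Esp n)) ⊆
      ⋃ j ∈ Finset.range (⌊1 / r⌋₊ + 1),
        Metric.ball (((j : ℝ) * r) • (x : Esp n)) (2 * r) := by
  rintro _ ⟨a, ha, _, ⟨z, hz, rfl⟩, rfl⟩
  set j := ⌊a / r⌋₊
  have hj : (j : ℝ) * r ≤ a := (le_div_iff₀ hr).mp (Nat.floor_le (div_nonneg ha.1.le hr.le))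
  have hj' : a < (j : ℝ) * r + r := by
    have := (div_lt_iff₀ hr).mp (Nat.lt_floor_add_one (a / r))
    linarith
  simp only [Set.mem_iUnion, Finset.mem_range]
  refine ⟨j, Nat.lt_succ_of_le (Nat.floor_le_floor (div_le_div_of_nonneg_right ha.2.le hr.le)),
    ?_⟩
  have hx : ‖(x : Esp n)‖ = 1 := mem_sphere_zero_iff_norm.mp x.2
  have hchord : ‖(z : Esp n) - x‖ < r := (norm_sub_le_gdist x z).trans_lt hz
  rw [Metric.mem_ball, dist_eq_norm,
    show a • (z : Esp n) - ((j : ℝ) * r) • (x : Esp n) =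
      a • ((z : Esp n) - x) + (a - j * r) • (x : Esp n) by module]
  calc ‖a • ((z : Esp n) - x) + (a - j * r) • (x : Esp n)‖
      ≤ a * ‖(z : Esp n) - x‖ + (a - j * r) := by
        refine (norm_add_le _ _).trans_eq ?_
        rw [norm_smul, norm_smul, hx, Real.norm_of_nonneg ha.1.le,
          Real.norm_of_nonneg (sub_nonneg.mpr hj), mul_one]
    _ < 2 * r := by nlinarith [norm_nonneg ((z : Esp n) - x), ha.2]

lemma measureReal_gball_le (x : Sph n) {r : ℝ} (hr0 : 0 < r) (hr1 : r ≤ 1) :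
    (sphMeasure n).real (gball x r) ≤
      (n + 1) * 2 ^ (n + 2) * volume.real (Metric.ball (0 : Esp n) 1) * r ^ n := by
  set V := volume.real (Metric.ball (0 : Esp n) 1)
  set N := ⌊1 / r⌋₊ + 1
  have hN : (N : ℝ) ≤ 2 / r := by
    have hfloor := Nat.floor_le (one_div_pos.mpr hr0).le
    have hr_inv : 1 ≤ 1 / r := one_le_one_div hr0 hr1
    push_cast [N]
    linarith [show 2 / r = 1 / r + 1 / r by ring]
  have hcone : volume.real (Set.Ioo (0 : ℝ) 1 • ((↑) '' gball x r) : Set (Esp n)) ≤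
      N * ((2 * r) ^ (n + 1) * V) :=
    calc _ ≤ volume.real (⋃ j ∈ Finset.range N,
            Metric.ball (((j : ℝ) * r) • (x : Esp n)) (2 * r)) :=
          measureReal_mono (smul_image_gball_subset_iUnion_ball hr0)
            (measure_biUnion_lt_top (Finset.finite_toSet _) fun _ _ => measure_ball_lt_top).ne
      _ ≤ ∑ j ∈ Finset.range N,
            volume.real (Metric.ball (((j : ℝ) * r) • (x : Esp n)) (2 * r)) :=
          measureReal_biUnion_finset_le _ _
      _ = N * ((2 * r) ^ (n + 1) * V) := by
          simp [volume_real_ball _ (by positivity : (0 : ℝ) ≤ 2 * r), V]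
  rw [sphMeasure_real_apply (isOpen_gball x r).measurableSet]
  calc _ ≤ (n + 1) * (2 / r * ((2 * r) ^ (n + 1) * V)) := by
        gcongr
        exact hcone.trans (by gcongr)
    _ = (n + 1) * 2 ^ (n + 2) * V * r ^ n := by
        field_simp
        ring

end Cap

section Tube

variable {m : ℕ}

def tailSq (f : Fin (m + 2) → ℝ) : ℝ := ∑ j : Fin m, f j.succ.succ ^ 2

lemma tailSq_nonneg (f : Fin (m + 2) → ℝ) : 0 ≤ tailSq f :=
  Finset.sum_nonneg fun _ _ => sq_nonneg _

lemma sum_sq_eq_add_tailSq (f : Fin (m + 2) → ℝ) :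
    ∑ i, f i ^ 2 = f 0 ^ 2 + f 1 ^ 2 + tailSq f := by
  simp only [Fin.sum_univ_succ (n := m + 1), Fin.sum_univ_succ (n := m), tailSq,
    Fin.succ_zero_eq_one]
  ring

lemma tailSq_smul (c : ℝ) (f : Fin (m + 2) → ℝ) : tailSq (c • f) = c ^ 2 * tailSq f := by
  simp only [tailSq, Pi.smul_apply, smul_eq_mul, mul_pow, Finset.mul_sum]

lemma sq_coord_zero_add_sq_coord_one (x : Sph (m + 1)) :
    (x : Esp (m + 1)) 0 ^ 2 + (x : Esp (m + 1)) 1 ^ 2 = 1 - tailSq (x : Esp (m + 1)).ofLp := by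
  linarith [sum_sq_coord_eq_one x, sum_sq_eq_add_tailSq (x : Esp (m + 1)).ofLp]

lemma tailSq_le_one (x : Sph (m + 1)) : tailSq (x : Esp (m + 1)).ofLp ≤ 1 := by
  nlinarith [sq_coord_zero_add_sq_coord_one x]

lemma norm_Qfun_sq (k : ℕ) (x : Sph (m + 1)) :
    ‖Qfun (m + 1) k x‖ ^ 2 = (1 - tailSq (x : Esp (m + 1)).ofLp) ^ k := by
  rw [← sq_coord_zero_add_sq_coord_one, Qfun, norm_pow, ← pow_mul, mul_comm k 2, pow_mul,
    Complex.sq_norm, Complex.normSq_apply]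
  simp [sq]

lemma norm_Qfun_le_one (k : ℕ) (x : Sph (m + 1)) : ‖Qfun (m + 1) k x‖ ≤ 1 := by
  refine (pow_le_one_iff_of_nonneg (norm_nonneg _) two_ne_zero).mp ?_
  rw [norm_Qfun_sq]
  exact pow_le_one₀ (sub_nonneg.mpr (tailSq_le_one x))
    (sub_le_self _ (tailSq_nonneg _))

def tube (m : ℕ) (s : ℝ) : Set (Sph (m + 1)) := {x | tailSq (x : Esp (m + 1)).ofLp < s ^ 2}

lemma isOpen_tube (m : ℕ) (s : ℝ) : IsOpen (tube m s) :=
  isOpen_lt (continuous_finsetSum _ fun j _ =>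
    ((EuclideanSpace.proj j.succ.succ).continuous.comp continuous_subtype_val).pow 2)
    continuous_const

/-- Points of this box lie in the open cone over `tube m s`: their first coordinate keeps them
in the shell `1/2 < ‖y‖ < 1`, and the side `s / (2 (m + 1))` keeps `tailSq` below `s² / 4`. -/
def coneBox (m : ℕ) (s : ℝ) : Set (Fin (m + 2) → ℝ) :=
  Set.univ.pi fun i => Set.Ioo (Matrix.vecCons (1 / 2) 0 i)
    (Matrix.vecCons (3 / 4) (Matrix.vecCons (1 / 4) fun _ => s / (2 * (m + 1))) i)

lemma mem_coneBox {s : ℝ} {f : Fin (m + 2) → ℝ} :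
    f ∈ coneBox m s ↔ f 0 ∈ Set.Ioo (1 / 2) (3 / 4) ∧ f 1 ∈ Set.Ioo 0 (1 / 4) ∧
      ∀ j : Fin m, f j.succ.succ ∈ Set.Ioo 0 (s / (2 * (m + 1))) := by
  simp [coneBox, Fin.forall_fin_succ]

lemma volume_real_coneBox {s : ℝ} (hs : 0 ≤ s) :
    volume.real (coneBox m s) = 1 / 16 * (s / (2 * (m + 1))) ^ m := by
  rw [measureReal_def, coneBox, Real.volume_pi_Ioo_toReal]
  · simp [Fin.prod_univ_succ]
    ring
  · intro i
    refine Fin.cases (by norm_num) (fun i => Fin.cases (by norm_num) (fun j => ?_) i) i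
    simp only [Matrix.cons_val_succ, Pi.zero_apply]
    positivity

lemma four_mul_tailSq_lt_of_mem_coneBox {s : ℝ} (hs : 0 < s) {f : Fin (m + 2) → ℝ}
    (hf : f ∈ coneBox m s) : 4 * tailSq f < s ^ 2 := by
  have hle : tailSq f ≤ m * (s / (2 * (m + 1))) ^ 2 := by
    have := Finset.sum_le_card_nsmul Finset.univ (fun j : Fin m => f j.succ.succ ^ 2)
      ((s / (2 * (m + 1))) ^ 2) fun j _ =>
        pow_le_pow_left₀ ((mem_coneBox.mp hf).2.2 j).1.le ((mem_coneBox.mp hf).2.2 j).2.le 2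
    simpa [tailSq] using this
  have hm : 4 * (m * (s / (2 * (m + 1))) ^ 2) < s ^ 2 := by
    rw [div_pow, mul_pow, ← mul_div_assoc, ← mul_div_assoc, div_lt_iff₀ (by positivity)]
    nlinarith [mul_pos (sq_pos_of_pos hs) (by positivity : (0 : ℝ) < m ^ 2 + m + 1)]
  linarith

lemma ofLp_preimage_coneBox_subset {s : ℝ} (hs0 : 0 < s) (hs1 : s ≤ 1) :
    WithLp.ofLp ⁻¹' coneBox m s ⊆
      (Set.Ioo (0 : ℝ) 1 • ((↑) '' tube m s) : Set (Esp (m + 1))) := by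
  intro y hy
  obtain ⟨⟨h0, h0'⟩, ⟨h1, h1'⟩, -⟩ := mem_coneBox.mp hy
  have htail := four_mul_tailSq_lt_of_mem_coneBox hs0 hy
  have htail0 := tailSq_nonneg y.ofLp
  have hnorm : ‖y‖ ^ 2 = y 0 ^ 2 + y 1 ^ 2 + tailSq y.ofLp := by
    rw [EuclideanSpace.norm_sq_eq, ← sum_sq_eq_add_tailSq]
    simp
  have hy1 : ‖y‖ < 1 := by nlinarith [norm_nonneg y]
  have hy2 : 1 / 2 < ‖y‖ := by nlinarith [norm_nonneg y]
  have hz : ‖y‖⁻¹ • y ∈ Sph (m + 1) := by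
    rw [mem_sphere_zero_iff_norm, norm_smul, norm_inv, norm_norm,
      inv_mul_cancel₀ (by positivity)]
  refine ⟨‖y‖, ⟨by positivity, hy1⟩, _, ⟨⟨_, hz⟩, ?_, rfl⟩, smul_inv_smul₀ (by positivity) y⟩
  have hinv : ‖y‖⁻¹ < 2 := by rw [inv_lt_comm₀ (by positivity) two_pos]; linarith
  change tailSq (‖y‖⁻¹ • y).ofLp < s ^ 2
  rw [WithLp.ofLp_smul, tailSq_smul]
  nlinarith [mul_le_mul_of_nonneg_right (pow_le_pow_left₀ (by positivity) hinv.le 2) htail0]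

lemma measureReal_tube_ge {s : ℝ} (hs0 : 0 < s) (hs1 : s ≤ 1) :
    (m + 2) / 16 * (s / (2 * (m + 1))) ^ m ≤ (sphMeasure (m + 1)).real (tube m s) := by
  have hmeas : MeasurableSet (coneBox m s) := MeasurableSet.univ_pi fun _ => measurableSet_Ioo
  have hbox := (PiLp.volume_preserving_ofLp (Fin (m + 2))).measureReal_preimage
    hmeas.nullMeasurableSet
  rw [sphMeasure_real_apply (isOpen_tube m s).measurableSet]
  calc _ = ((m + 1 : ℕ) + 1 : ℝ) *
        volume.real (WithLp.ofLp ⁻¹' coneBox m s : Set (Esp (m + 1))) := by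
        rw [hbox, volume_real_coneBox hs0.le]
        push_cast
        ring
    _ ≤ _ := mul_le_mul_of_nonneg_left (measureReal_mono (ofLp_preimage_coneBox_subset hs0 hs1)
        (volume_smul_image_ne_top _)) (by positivity)

end Tube

section Harmonic

variable {m : ℕ}

lemma continuous_Qfun (n k : ℕ) : Continuous (Qfun n k) := by
  unfold Qfun
  fun_prop

lemma integrable_norm_Qfun_sq (n k : ℕ) :
    Integrable (fun x => ‖Qfun n k x‖ ^ 2) (sphMeasure n) :=
  integrableOn_univ.mp
    (((continuous_Qfun n k).norm.pow 2).continuousOn.integrableOn_compact isCompact_univ)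

lemma half_le_norm_Qfun_sq {k : ℕ} {s : ℝ} (hks : k * s ^ 2 ≤ 1 / 2) {x : Sph (m + 1)}
    (hx : x ∈ tube m s) : 1 / 2 ≤ ‖Qfun (m + 1) k x‖ ^ 2 := by
  have hbernoulli := one_add_mul_le_pow (a := -tailSq (x : Esp (m + 1)).ofLp)
    (by linarith [tailSq_le_one x]) k
  have htube : (k : ℝ) * tailSq (x : Esp (m + 1)).ofLp ≤ k * s ^ 2 :=
    mul_le_mul_of_nonneg_left (le_of_lt hx) k.cast_nonneg
  rw [norm_Qfun_sq, sub_eq_add_neg]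
  linarith

lemma half_measureReal_tube_le_integral {k : ℕ} {s : ℝ} (hks : k * s ^ 2 ≤ 1 / 2) :
    1 / 2 * (sphMeasure (m + 1)).real (tube m s) ≤
      ∫ x, ‖Qfun (m + 1) k x‖ ^ 2 ∂sphMeasure (m + 1) :=
  calc 1 / 2 * (sphMeasure (m + 1)).real (tube m s)
      = ∫ _ in tube m s, (1 / 2 : ℝ) ∂sphMeasure (m + 1) := by
        rw [setIntegral_const, smul_eq_mul, mul_comm]
    _ ≤ ∫ x in tube m s, ‖Qfun (m + 1) k x‖ ^ 2 ∂sphMeasure (m + 1) :=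
        setIntegral_mono_on (integrableOn_const (measure_ne_top _ _))
          (integrable_norm_Qfun_sq _ _).integrableOn (isOpen_tube m s).measurableSet
          fun _ => half_le_norm_Qfun_sq hks
    _ ≤ _ := setIntegral_le_integral (integrable_norm_Qfun_sq _ _)
        (Filter.Eventually.of_forall fun _ => by positivity)

lemma exists_Qnorm_ge (m : ℕ) :
    ∃ c, 0 < c ∧ ∀ k : ℕ, 1 ≤ k → c * (k : ℝ) ^ (-(m : ℝ) / 4) ≤ Qnorm (m + 1) k := by
  refine ⟨√((m + 2) / 32 / (4 * (m + 1)) ^ m), by positivity, fun k hk => ?_⟩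
  have hk0 : (0 : ℝ) < k := Nat.cast_pos.mpr hk
  set s := (k : ℝ) ^ (-(1 : ℝ) / 2) / 2
  have hs0 : 0 < s := by positivity
  have hs1 : s ≤ 1 := (half_le_self (by positivity)).trans
    (Real.rpow_le_one_of_one_le_of_nonpos (Nat.one_le_cast.mpr hk) (by norm_num))
  have hks : k * s ^ 2 ≤ 1 / 2 := by
    rw [div_pow, ← Real.rpow_mul_natCast hk0.le, show -(1 : ℝ) / 2 * (2 : ℕ) = -1 by norm_num,
      Real.rpow_neg_one, mul_div_assoc', mul_inv_cancel₀ hk0.ne']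
    norm_num
  have hsm : s ^ m = (k : ℝ) ^ (-(m : ℝ) / 2) / 2 ^ m := by
    rw [div_pow, ← Real.rpow_mul_natCast hk0.le]
    ring_nf
  rw [Qnorm, Real.le_sqrt (by positivity) (integral_nonneg fun _ => by positivity)]
  calc (√((m + 2) / 32 / (4 * (m + 1)) ^ m) * (k : ℝ) ^ (-(m : ℝ) / 4)) ^ 2
      = 1 / 2 * ((m + 2) / 16 * (s / (2 * (m + 1))) ^ m) := by
        rw [mul_pow, Real.sq_sqrt (by positivity), ← Real.rpow_mul_natCast hk0.le, div_pow s,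
          hsm, show -(m : ℝ) / 4 * (2 : ℕ) = -(m : ℝ) / 2 by push_cast; ring]
        field_simp
        rw [mul_assoc _ (2 ^ m), ← mul_pow]
        ring
    _ ≤ 1 / 2 * (sphMeasure (m + 1)).real (tube m s) := by
        gcongr
        exact measureReal_tube_ge hs0 hs1
    _ ≤ _ := half_measureReal_tube_le_integral hks

lemma norm_Qtilde_le (k : ℕ) (y : Sph (m + 1)) :
    ‖Qtilde (m + 1) k y‖ ≤ (Qnorm (m + 1) k)⁻¹ := by
  have hQ : 0 ≤ Qnorm (m + 1) k := Real.sqrt_nonneg _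
  rw [Qtilde, norm_div, Complex.norm_real, Real.norm_of_nonneg hQ, div_eq_mul_inv]
  exact mul_le_of_le_one_left (inv_nonneg.mpr hQ) (norm_Qfun_le_one k y)

end Harmonic

lemma exists_L2g_Qtilde_le {n : ℕ} (hn : 1 ≤ n) :
    ∃ C, 0 < C ∧ ∀ k : ℕ, 1 ≤ k → ∀ (r : ℝ) (x : Sph n), 0 < r → r ≤ 1 →
      L2g (Qtilde n k) x r ≤ C * r ^ ((n : ℝ) / 2) * (k : ℝ) ^ (((n : ℝ) - 1) / 4) := by
  obtain ⟨m, rfl⟩ : ∃ m, n = m + 1 := ⟨n - 1, by omega⟩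
  obtain ⟨c, hc, hQ⟩ := exists_Qnorm_ge m
  set A := (m + 2) * 2 ^ (m + 3) * volume.real (Metric.ball (0 : Esp (m + 1)) 1)
  have hA : 0 < A := mul_pos (by positivity)
    (ENNReal.toReal_pos (Metric.measure_ball_pos _ _ one_pos).ne' measure_ball_lt_top.ne)
  refine ⟨c⁻¹ * √A, by positivity, fun k hk r x hr0 hr1 => ?_⟩
  have hk0 : (0 : ℝ) < k := Nat.cast_pos.mpr hk
  have hQinv : (Qnorm (m + 1) k)⁻¹ ≤ c⁻¹ * (k : ℝ) ^ ((m : ℝ) / 4) := by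
    refine (inv_anti₀ (by positivity) (hQ k hk)).trans_eq ?_
    rw [mul_inv, ← Real.rpow_neg hk0.le, neg_div, neg_neg]
  have hcap : √((sphMeasure (m + 1)).real (gball x r)) ≤ √A * r ^ (((m : ℝ) + 1) / 2) := by
    calc _ ≤ √(A * r ^ (m + 1)) :=
          Real.sqrt_le_sqrt ((measureReal_gball_le x hr0 hr1).trans_eq (by push_cast [A]; ring))
      _ = √A * r ^ (((m : ℝ) + 1) / 2) := by
          rw [Real.sqrt_mul hA.le, Real.sqrt_eq_rpow (r ^ (m + 1)), ← Real.rpow_natCast,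
            ← Real.rpow_mul hr0.le]
          push_cast
          ring_nf
  calc L2g (Qtilde (m + 1) k) x r
      ≤ (Qnorm (m + 1) k)⁻¹ * √((sphMeasure (m + 1)).real (gball x r)) :=
        L2g_le_of_norm_le (norm_Qtilde_le k) x r
    _ ≤ c⁻¹ * (k : ℝ) ^ ((m : ℝ) / 4) * (√A * r ^ (((m : ℝ) + 1) / 2)) := by gcongr
    _ = _ := by push_cast; ring_nf

/-- Estimate (4.3) of the paper: small-ball `L²` bounds for the normalized highest weight
spherical harmonics at scales `k⁻¹ ≤ r ≤ k^{-1/2}`; in particular, at `r = k⁻¹` one has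
`sup_x r^{-1/2} ‖Q̃_k‖_{L²(B_r(x))} ≤ C r^{(n-1)/4}`. -/
theorem highest_weight_small_ball_bounds (n : ℕ) (hn : 2 ≤ n) :
    ∃ C : ℝ, 0 < C ∧ ∀ k : ℕ, 1 ≤ k →
      (∀ (r : ℝ) (x : Sph n), (k : ℝ)⁻¹ ≤ r → r ≤ (k : ℝ) ^ (-(1 : ℝ) / 2) →
        L2g (Qtilde n k) x r ≤ C * r ^ ((n : ℝ) / 2) * (k : ℝ) ^ (((n : ℝ) - 1) / 4)) ∧
      (∀ x : Sph n,
        ((k : ℝ)⁻¹) ^ (-(1 : ℝ) / 2) * L2g (Qtilde n k) x ((k : ℝ)⁻¹) ≤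
          C * ((k : ℝ)⁻¹) ^ (((n : ℝ) - 1) / 4)) := by
  obtain ⟨C, hC, hL2⟩ := exists_L2g_Qtilde_le (n := n) (by omega)
  refine ⟨C, hC, fun k hk => ?_⟩
  have hk0 : (0 : ℝ) < k := Nat.cast_pos.mpr hk
  refine ⟨fun r x hkr hrk => ?_, fun x => ?_⟩
  · exact hL2 k hk r x ((inv_pos.mpr hk0).trans_le hkr) (hrk.trans
      (Real.rpow_le_one_of_one_le_of_nonpos (Nat.one_le_cast.mpr hk) (by norm_num)))
  · calc _ ≤ ((k : ℝ)⁻¹) ^ (-(1 : ℝ) / 2) *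
          (C * ((k : ℝ)⁻¹) ^ ((n : ℝ) / 2) * (k : ℝ) ^ (((n : ℝ) - 1) / 4)) :=
          mul_le_mul_of_nonneg_left (hL2 k hk _ x (inv_pos.mpr hk0)
            (inv_le_one_of_one_le₀ (Nat.one_le_cast.mpr hk))) (by positivity)
      _ = C * (k : ℝ) ^ ((1 : ℝ) / 2 + -((n : ℝ) / 2) + ((n : ℝ) - 1) / 4) := by
          simp only [Real.inv_rpow hk0.le, ← Real.rpow_neg hk0.le, Real.rpow_add hk0]
          ring_nf
      _ = _ := by
          rw [Real.inv_rpow hk0.le, ← Real.rpow_neg hk0.le]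
          ring_nf
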